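/- arXiv:2209.01046 — 5 statements merged into one kernel-verified Lean document; each statement's English description precedes it below -/
import Mathlib

section
/- For p, q ∈ [1,∞] with 1/p + 1/q = 1, the logarithmic norm of a real n×n matrix A induced by the L^p norm equals the logarithmic norm of Aᵀ induced by the L^q norm: μ_p(A) = μ_q(Aᵀ). -/
open Matrix Finset
open scoped ENNReal

/-- The strictly increasing enumeration of a `k`-element subset of `Fin n`. -/
noncomputable def emb {n k : ℕ} (s : Finset (Fin n)) (h : s.card = k) : Fin k → Fin n :=
  fun i => ((s.orderIsoOfFin h) i : Fin n)

/-- The `k`-th multiplicative compound: the matrix of all `k × k` minors. -/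
noncomputable def mulCompound {𝕜 : Type*} [CommRing 𝕜] {n m : ℕ} (k : ℕ)
    (A : Matrix (Fin n) (Fin m) 𝕜) :
    Matrix {s : Finset (Fin n) // s.card = k} {t : Finset (Fin m) // t.card = k} 𝕜 :=
  fun α β => (A.submatrix (emb α.1 α.2) (emb β.1 β.2)).det

/-- The `k`-th additive compound: `A^{[k]} = d/dε (I + εA)^{(k)} |_{ε=0}`. -/
noncomputable def addCompound {𝕜 : Type*} [RCLike 𝕜] {n : ℕ} (k : ℕ)
    (A : Matrix (Fin n) (Fin n) 𝕜) :
    Matrix {s : Finset (Fin n) // s.card = k} {s : Finset (Fin n) // s.card = k} 𝕜 :=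
  fun α β => deriv (fun ε : 𝕜 => mulCompound k (1 + ε • A) α β) 0

/-- The signed anti-diagonal matrix `U`, written in the coordinates of
`Q(k,n)` and `Q(n-k,n)`: its entry at `(t, s)` is `s(s) = (-1)^{∑ (i+1)}` when `t = sᶜ`. -/
noncomputable def Umat (𝕜 : Type*) [CommRing 𝕜] (n k : ℕ) :
    Matrix {t : Finset (Fin n) // t.card = n - k} {s : Finset (Fin n) // s.card = k} 𝕜 :=
  fun t s => if t.1 = (s.1)ᶜ then (-1 : 𝕜) ^ (∑ i ∈ s.1, ((i : ℕ) + 1)) else 0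

/-- The operator norm of a real matrix induced by the `L^p` vector norm. -/
noncomputable def pOpNorm {ι : Type*} [Fintype ι] [DecidableEq ι] (p : ℝ≥0∞) (hp : 1 ≤ p)
    (A : Matrix ι ι ℝ) : ℝ :=
  letI : Fact (1 ≤ p) := ⟨hp⟩
  ‖LinearMap.toContinuousLinearMap
      (Matrix.toLin (PiLp.basisFun p ℝ ι) (PiLp.basisFun p ℝ ι) A)‖

/-- The logarithmic norm induced by the `L^p` norm:
`μ_p(A) = lim_{h→0⁺} (‖I + hA‖_p - 1)/h`. -/
noncomputable def logNorm {ι : Type*} [Fintype ι] [DecidableEq ι] (p : ℝ≥0∞) (hp : 1 ≤ p)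
    (A : Matrix ι ι ℝ) : ℝ :=
  Filter.limUnder (nhdsWithin (0 : ℝ) (Set.Ioi 0))
    fun h : ℝ => (pOpNorm p hp (1 + h • A) - 1) / h

/-!
Since `ℓ^q` is isometrically the dual of `ℓ^p` under the pairing `y ⬝ᵥ z` (Hölder's inequality,
with equality attained by `y = sign z · (|z| / ‖z‖)^(q-1)`, or by a signed basis vector when
`q = ∞`), and `y ⬝ᵥ Aᵀ x = A y ⬝ᵥ x`, the operator norm of `A` on `ℓ^p` equals that of `Aᵀ` on
`ℓ^q`. As `(1 + h • A)ᵀ = 1 + h • Aᵀ`, the difference quotients defining both logarithmic norms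
agree for every `h`.
-/

open WithLp

theorem abs_sign_le_one (x : ℝ) : |(SignType.sign x : ℝ)| ≤ 1 := by
  rcases lt_trichotomy x 0 with h | h | h <;> simp [h]

namespace PiLp

variable {ι : Type*} [Fintype ι]

theorem abs_dotProduct_le (p q : ℝ≥0∞) [Fact (1 ≤ p)] [Fact (1 ≤ q)] [p.HolderConjugate q]
    (x : PiLp p (fun _ : ι => ℝ)) (y : PiLp q (fun _ : ι => ℝ)) :
    |ofLp x ⬝ᵥ ofLp y| ≤ ‖x‖ * ‖y‖ := by
  -- Hölder's inequality, read off from the norm bound of the `lp` duality pairing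
  have hB : ∀ _ : ι, ‖ContinuousLinearMap.mul ℝ ℝ‖ ≤ (1 : NNReal) := fun _ => by simp
  set P := lp.dualPairing p q _ hB
  have h := P.le_opNorm₂ ((lpPiLpₗᵢ _ ℝ).symm x) ((lpPiLpₗᵢ _ ℝ).symm y)
  rw [lp.dualPairing_apply, tsum_fintype] at h
  simp only [LinearIsometryEquiv.norm_map, Real.norm_eq_abs] at h
  calc |ofLp x ⬝ᵥ ofLp y| ≤ ‖P‖ * ‖x‖ * ‖y‖ := h
    _ ≤ 1 * ‖x‖ * ‖y‖ := by gcongr; exact lp.norm_dualPairing _ hB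
    _ = ‖x‖ * ‖y‖ := by rw [one_mul]

theorem exists_norm_le_one_dotProduct_eq_norm_top (z : PiLp ∞ (fun _ : ι => ℝ)) :
    ∃ y : PiLp 1 (fun _ : ι => ℝ), ‖y‖ ≤ 1 ∧ ofLp y ⬝ᵥ ofLp z = ‖z‖ := by
  classical
  rcases isEmpty_or_nonempty ι with hι | hι
  · exact ⟨0, by simp, by simp [Subsingleton.elim z 0]⟩
  obtain ⟨i, hi⟩ := Finite.exists_max fun j => |z j|
  have hz : ‖z‖ = |z i| := by
    refine le_antisymm ?_ (norm_apply_le z i)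
    rw [← norm_ofLp]
    exact (pi_norm_le_iff_of_nonneg (abs_nonneg _)).2 hi
  refine ⟨single 1 i (SignType.sign (z i) : ℝ), ?_, ?_⟩
  · rw [norm_single, Real.norm_eq_abs]
    exact abs_sign_le_one _
  · simp [hz]

theorem sum_rpow_div_norm_eq_one {q : ℝ≥0∞} [Fact (1 ≤ q)] (hq : 0 < q.toReal)
    {z : PiLp q (fun _ : ι => ℝ)} (hz : z ≠ 0) : ∑ i, (|z i| / ‖z‖) ^ q.toReal = 1 := by
  have hN : 0 < ‖z‖ := norm_pos_iff.2 hz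
  have hsum : ∑ i, |z i| ^ q.toReal = ‖z‖ ^ q.toReal := by
    rw [norm_eq_sum hq, ← Real.rpow_mul (by positivity), one_div_mul_cancel hq.ne', Real.rpow_one]
    simp only [Real.norm_eq_abs]
  simp_rw [Real.div_rpow (abs_nonneg _) hN.le, ← Finset.sum_div, hsum]
  exact div_self (by positivity)

theorem exists_norm_le_one_dotProduct_eq_norm_of_ne_top (p q : ℝ≥0∞) [Fact (1 ≤ p)]
    [Fact (1 ≤ q)] [p.HolderConjugate q] (hq : q ≠ ∞) (z : PiLp q (fun _ : ι => ℝ)) :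
    ∃ y : PiLp p (fun _ : ι => ℝ), ‖y‖ ≤ 1 ∧ ofLp y ⬝ᵥ ofLp z = ‖z‖ := by
  rcases eq_or_ne z 0 with rfl | hz
  · exact ⟨0, by simp, by simp⟩
  set r := q.toReal
  have hr : 1 ≤ r := ENNReal.toReal_one ▸ ENNReal.toReal_mono hq Fact.out
  have hN : 0 < ‖z‖ := norm_pos_iff.2 hz
  set a : ι → ℝ := fun i => |z i| / ‖z‖
  have ha0 : ∀ i, 0 ≤ a i := fun i => by positivity
  have ha1 : ∀ i, a i ≤ 1 := fun i => div_le_one_of_le₀ (by simpa using norm_apply_le z i) hN.le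
  have hsum : ∑ i, a i ^ r = 1 := sum_rpow_div_norm_eq_one (by positivity) hz
  set y : PiLp p (fun _ : ι => ℝ) := toLp p fun i => SignType.sign (z i) * a i ^ (r - 1)
  have hy : ∀ i, |y i| ≤ a i ^ (r - 1) := fun i => by
    rw [abs_mul, abs_of_nonneg (Real.rpow_nonneg (ha0 i) _)]
    exact mul_le_of_le_one_left (Real.rpow_nonneg (ha0 i) _) (abs_sign_le_one _)
  refine ⟨y, ?_, ?_⟩
  · rcases eq_or_ne p ∞ with rfl | hp
    · rw [← norm_ofLp]
      refine (pi_norm_le_iff_of_nonneg zero_le_one).2 fun i => ?_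
      exact (hy i).trans (Real.rpow_le_one (ha0 i) (ha1 i) (by linarith))
    · have hs : 0 < p.toReal := ENNReal.toReal_pos (ENNReal.HolderConjugate.ne_zero p q) hp
      have hc : r.HolderConjugate p.toReal := by
        simpa using ENNReal.HolderTriple.toReal 1 (by positivity) hs (p := q) (q := p)
      rw [norm_eq_sum hs]
      refine Real.rpow_le_one (by positivity) ?_ (by positivity)
      calc ∑ i, ‖y i‖ ^ p.toReal ≤ ∑ i, (a i ^ (r - 1)) ^ p.toReal := by
            gcongr with i; exact hy i
        _ = 1 := by simp_rw [← Real.rpow_mul (ha0 _), hc.sub_one_mul_conj, hsum]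
  · calc ofLp y ⬝ᵥ ofLp z = ∑ i, ‖z‖ * (a i * a i ^ (r - 1)) := by
          refine Finset.sum_congr rfl fun i _ => ?_
          change SignType.sign (z i) * a i ^ (r - 1) * z i = _
          rw [← mul_assoc, mul_div_cancel₀ _ hN.ne', ← sign_mul_self]
          ring
      _ = ‖z‖ := by
          have h : ∀ i, a i * a i ^ (r - 1) = a i ^ r := fun i => by
            rw [← Real.rpow_one_add' (ha0 i) (by linarith), add_sub_cancel]
          simp_rw [h, ← Finset.mul_sum, hsum, mul_one]

theorem exists_norm_le_one_dotProduct_eq_norm (p q : ℝ≥0∞) [Fact (1 ≤ p)] [Fact (1 ≤ q)]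
    [p.HolderConjugate q] (z : PiLp q (fun _ : ι => ℝ)) :
    ∃ y : PiLp p (fun _ : ι => ℝ), ‖y‖ ≤ 1 ∧ ofLp y ⬝ᵥ ofLp z = ‖z‖ := by
  rcases eq_or_ne q ∞ with rfl | hq
  · obtain rfl : p = 1 := (ENNReal.HolderConjugate.eq_top_iff_eq_one ∞ p).1 rfl
    exact exists_norm_le_one_dotProduct_eq_norm_top z
  · exact exists_norm_le_one_dotProduct_eq_norm_of_ne_top p q hq z

end PiLp

namespace Matrix

variable {m n : Type*} [Fintype m] [Fintype n] [DecidableEq m] [DecidableEq n]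

theorem opNorm_toLpLin_transpose_le (p q : ℝ≥0∞) [Fact (1 ≤ p)] [Fact (1 ≤ q)]
    [p.HolderConjugate q] (A : Matrix m n ℝ) :
    ‖(toLpLin q q Aᵀ).toContinuousLinearMap‖ ≤ ‖(toLpLin p p A).toContinuousLinearMap‖ := by
  set T := (toLpLin p p A).toContinuousLinearMap
  refine ContinuousLinearMap.opNorm_le_bound _ (norm_nonneg _) fun x => ?_
  obtain ⟨y, hy1, hy⟩ := PiLp.exists_norm_le_one_dotProduct_eq_norm p q (toLpLin q q Aᵀ x)
  calc ‖toLpLin q q Aᵀ x‖ = ofLp y ⬝ᵥ (Aᵀ *ᵥ ofLp x) := hy.symm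
    _ = ofLp (T y) ⬝ᵥ ofLp x := by rw [dotProduct_mulVec, vecMul_transpose]; rfl
    _ ≤ ‖T y‖ * ‖x‖ := (le_abs_self _).trans (PiLp.abs_dotProduct_le p q _ _)
    _ ≤ ‖T‖ * ‖y‖ * ‖x‖ := by gcongr; exact T.le_opNorm y
    _ ≤ ‖T‖ * ‖x‖ := by gcongr; exact mul_le_of_le_one_right (norm_nonneg _) hy1

theorem opNorm_toLpLin_transpose (p q : ℝ≥0∞) [Fact (1 ≤ p)] [Fact (1 ≤ q)]
    [p.HolderConjugate q] (A : Matrix m n ℝ) :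
    ‖(toLpLin q q Aᵀ).toContinuousLinearMap‖ = ‖(toLpLin p p A).toContinuousLinearMap‖ :=
  (opNorm_toLpLin_transpose_le p q A).antisymm <| by
    simpa using opNorm_toLpLin_transpose_le q p Aᵀ

end Matrix

theorem pOpNorm_transpose {ι : Type*} [Fintype ι] [DecidableEq ι] {p q : ℝ≥0∞} (hp : 1 ≤ p)
    (hq : 1 ≤ q) [p.HolderConjugate q] (A : Matrix ι ι ℝ) :
    pOpNorm q hq Aᵀ = pOpNorm p hp A :=
  haveI : Fact (1 ≤ p) := ⟨hp⟩
  haveI : Fact (1 ≤ q) := ⟨hq⟩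
  opNorm_toLpLin_transpose p q A

/-- For Hölder conjugate `p, q ∈ [1,∞]`, the log norm of a real matrix induced by
the `L^p` norm equals the log norm of its transpose induced by the `L^q` norm. -/
theorem logNorm_transpose_dual {n : ℕ} (p q : ℝ≥0∞) (hp : 1 ≤ p) (hq : 1 ≤ q)
    (hpq : 1 / p + 1 / q = 1) (A : Matrix (Fin n) (Fin n) ℝ) :
    logNorm p hp A = logNorm q hq Aᵀ := by
  have : p.HolderConjugate q := ENNReal.holderConjugate_iff.2 (by simpa only [one_div] using hpq)
  unfold logNorm
  congr 1
  funext h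
  rw [← pOpNorm_transpose hp hq, transpose_add, transpose_smul, transpose_one]
end

section
/- Sylvester–Franke identity: for A ∈ ℂ^{n×n} and k ∈ {1,…,n}, det(A^{(k)}) = (det A)^{binom(n−1,k−1)}. -/
open Matrix Finset
open scoped ENNReal

/-!
Under the identification of `A^{(k)}` with the matrix of `⋀ᵏ A` in the basis of wedges of
standard basis vectors, functoriality of `⋀ᵏ` makes `A ↦ det A^{(k)}` multiplicative, so by
Gaussian elimination it suffices to treat diagonal matrices and transvections. For
`diagonal d` the compound is diagonal with entries `∏ i ∈ s, d i`, and each `d i` occurs in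
`binom(n-1, k-1)` of them. For a transvection, `c ↦ det (transvection i j c)^{(k)}` is a
polynomial in `c` that is a unit in `R[X]` (its inverse comes from `-c`), hence constant,
and its value at `c = 0` is `1`.
-/

section

variable {R : Type*} [CommRing R] {n k : ℕ}

lemma emb_eq_orderEmbOfFin (s : Finset (Fin n)) (h : s.card = k) :
    emb s h = s.orderEmbOfFin h :=
  funext (s.coe_orderIsoOfFin_apply h)

lemma emb_injective (s : Finset (Fin n)) (h : s.card = k) : Function.Injective (emb s h) := by
  rw [emb_eq_orderEmbOfFin]
  exact (s.orderEmbOfFin h).injective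

lemma range_emb (s : Finset (Fin n)) (h : s.card = k) : Set.range (emb s h) = s := by
  rw [emb_eq_orderEmbOfFin]
  exact s.range_orderEmbOfFin h

lemma emb_mem (s : Finset (Fin n)) (h : s.card = k) (i : Fin k) : emb s h i ∈ s := by
  rw [emb_eq_orderEmbOfFin]
  exact s.orderEmbOfFin_mem h i

variable (n k) in
def powersetCardEquiv : {s : Finset (Fin n) // s.card = k} ≃ Set.powersetCard (Fin n) k :=
  Equiv.refl _

theorem mulCompound_eq_toMatrix_exteriorPower_map (A : Matrix (Fin n) (Fin n) R) :
    mulCompound k A =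
      (LinearMap.toMatrix ((Pi.basisFun R (Fin n)).exteriorPower k)
        ((Pi.basisFun R (Fin n)).exteriorPower k) (exteriorPower.map k (toLin' A))).submatrix
        (powersetCardEquiv n k) (powersetCardEquiv n k) := by
  ext s t
  simp only [mulCompound, submatrix_apply, LinearMap.toMatrix_apply,
    exteriorPower.basis_repr_apply, exteriorPower.basis_apply, exteriorPower.ιMulti_family,
    exteriorPower.map_apply_ιMulti, exteriorPower.ιMultiDual_apply_ιMulti]
  rw [← det_transpose]
  congr 1
  ext i j
  simp only [emb_eq_orderEmbOfFin, transpose_apply, submatrix_apply,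
    Set.powersetCard.ofFinEmbEquiv_symm_apply, Function.comp_apply, Pi.basisFun_apply,
    toLin'_apply, mulVec_single, MulOpposite.op_one, one_smul, Module.Basis.coord_apply,
    Pi.basisFun_repr, col_apply, of_apply]
  rfl

theorem mulCompound_mul (A B : Matrix (Fin n) (Fin n) R) :
    mulCompound k (A * B) = mulCompound k A * mulCompound k B := by
  simp only [mulCompound_eq_toMatrix_exteriorPower_map, toLin'_mul, exteriorPower.map_comp]
  rw [LinearMap.toMatrix_comp _ ((Pi.basisFun R (Fin n)).exteriorPower k), submatrix_mul_equiv]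

theorem mulCompound_one : mulCompound k (1 : Matrix (Fin n) (Fin n) R) = 1 := by
  simp only [mulCompound_eq_toMatrix_exteriorPower_map, toLin'_one, exteriorPower.map_id,
    LinearMap.toMatrix_id, submatrix_one_equiv]

theorem mulCompound_map {S : Type*} [CommRing S] (f : R →+* S) (A : Matrix (Fin n) (Fin n) R) :
    mulCompound k (A.map f) = (mulCompound k A).map f := by
  ext s t
  exact (f.map_det _).symm

theorem mulCompound_diagonal (d : Fin n → R) :
    mulCompound k (diagonal d) =
      diagonal fun s : {s : Finset (Fin n) // s.card = k} => ∏ i ∈ s.1, d i := by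
  ext s t
  rcases eq_or_ne s t with rfl | hst
  · rw [diagonal_apply_eq, mulCompound, submatrix_diagonal _ _ (emb_injective s.1 s.2),
      det_diagonal]
    conv_rhs => rw [← s.1.map_orderEmbOfFin_univ s.2, prod_map]
    simp [emb_eq_orderEmbOfFin]
  · rw [diagonal_apply_ne _ hst]
    obtain ⟨x, hxt, hxs⟩ : ∃ x ∈ t.1, x ∉ s.1 := Finset.not_subset.1 fun hts =>
      hst (Subtype.ext (Finset.eq_of_subset_of_card_le hts (by rw [s.2, t.2])).symm)
    obtain ⟨j, rfl⟩ : x ∈ Set.range (emb t.1 t.2) := by rwa [range_emb]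
    refine det_eq_zero_of_column_eq_zero j fun i => diagonal_apply_ne _ ?_
    exact fun h => hxs (h ▸ emb_mem s.1 s.2 i)

end

lemma card_filter_mem_powersetCard_univ {α : Type*} [Fintype α] [DecidableEq α] {k : ℕ}
    (hk : 1 ≤ k) (a : α) :
    #((powersetCard k univ).filter (a ∈ ·)) = (Fintype.card α - 1).choose (k - 1) := by
  simpa using card_filter_powersetCard_subset {a} univ k (subset_univ _) (by simpa using hk)

theorem det_mulCompound_diagonal {R : Type*} [CommRing R] {n k : ℕ} (hk : 1 ≤ k)
    (d : Fin n → R) :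
    (mulCompound k (diagonal d)).det = (diagonal d).det ^ (n - 1).choose (k - 1) := by
  rw [mulCompound_diagonal, det_diagonal, det_diagonal, ← prod_pow,
    ← prod_subtype (powersetCard k univ) (fun s => mem_powersetCard_univ)
      (fun s => ∏ i ∈ s, d i),
    prod_comm' (s' := fun i => (powersetCard k univ).filter (i ∈ ·)) (t' := univ) (by simp)]
  simp_rw [prod_const, card_filter_mem_powersetCard_univ hk, Fintype.card_fin]

lemma transvection_map {ι R S : Type*} [DecidableEq ι] [CommRing R] [CommRing S] (f : R →+* S)
    (i j : ι) (c : R) :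
    (transvection i j c).map f = transvection i j (f c) := by
  simp [transvection, Matrix.map_add, map_single]

open Polynomial in
theorem det_mulCompound_transvection {R : Type*} [CommRing R] [IsDomain R] {n k : ℕ}
    {i j : Fin n} (hij : i ≠ j) (c : R) :
    (mulCompound k (transvection i j c)).det = 1 := by
  set f : R[X] := (mulCompound k (transvection i j (X : R[X]))).det
  have hf : IsUnit f := by
    refine IsUnit.of_mul_eq_one (mulCompound k (transvection i j (-X : R[X]))).det ?_
    rw [← det_mul, ← mulCompound_mul, transvection_mul_transvection_same _ _ hij,
      add_neg_cancel, transvection_zero, mulCompound_one, det_one]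
  have heval (x : R) : (mulCompound k (transvection i j x)).det = f.eval x := by
    rw [← coe_evalRingHom, RingHom.map_det, RingHom.mapMatrix_apply, ← mulCompound_map,
      transvection_map, coe_evalRingHom, eval_X]
  have h0 : f.eval 0 = 1 := by rw [← heval, transvection_zero, mulCompound_one, det_one]
  obtain ⟨r, -, hr⟩ := isUnit_iff.1 hf
  rw [heval, ← hr, eval_C]
  rwa [← hr, eval_C] at h0

theorem det_mulCompound {K : Type*} [Field K] {n k : ℕ} (hk : 1 ≤ k)
    (A : Matrix (Fin n) (Fin n) K) :
    (mulCompound k A).det = A.det ^ (n - 1).choose (k - 1) := by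
  induction A using diagonal_transvection_induction with
  | hdiag d => exact det_mulCompound_diagonal hk d
  | htransvec t =>
    rw [t.det, one_pow, TransvectionStruct.toMatrix, det_mulCompound_transvection t.hij]
  | hmul A B hA hB => rw [mulCompound_mul, det_mul, det_mul, hA, hB, mul_pow]

theorem sylvester_franke_general {n k : ℕ} (hk1 : 1 ≤ k)
    (A : Matrix (Fin n) (Fin n) ℂ) :
    (mulCompound k A).det = A.det ^ ((n - 1).choose (k - 1)) :=
  det_mulCompound hk1 A

/-- Sylvester–Franke: `det (A^{(k)}) = (det A)^{binom(n-1, k-1)}`. -/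
theorem sylvester_franke {n k : ℕ} (hk1 : 1 ≤ k) (hkn : k ≤ n)
    (A : Matrix (Fin n) (Fin n) ℂ) :
    (mulCompound k A).det = A.det ^ ((n - 1).choose (k - 1)) :=
  sylvester_franke_general hk1 A
end

section
/- Duality of multiplicative compounds: for A ∈ ℂ^{n×n}, k ∈ {1,…,n−1}, r = binom(n,k), and U the r×r anti-diagonal signed matrix with u_{ij} = s(α^j) if i+j = r+1 and 0 otherwise (where α^1,…,α^r are the lexicographically ordered elements of Q(k,n) and s(α) = (−1)^{α_1+⋯+α_k}), it holds that (A^{(k)})ᵀ Uᵀ A^{(n−k)} U = det(A) · I_r. -/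
/-
Entry `(α, β)` of `(A^{(k)})ᵀ Uᵀ A^{(n-k)} U` is `∑_γ ± A[γ, α] A[γᶜ, βᶜ]`. By the Laplace
expansion along the columns `β`, this is the determinant of `A` with its columns `β` replaced
by its columns `α`: that is `det A` when `α = β`, and `0` otherwise because two columns
coincide.

The Laplace expansion comes from sorting the permutations of `Fin n` by the image `γ` of `β`.
What is left is the sign of the increasing bijection `β → γ, βᶜ → γᶜ`, namely
`(-1)^(Σβ + Σγ)`: moving one element of `γ` down by one multiplies the permutation by an
adjacent transposition, and repeating this ends at the initial segment of `Fin n`.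
-/


open Matrix Finset
open scoped ENNReal

open Equiv

section LinearOrder

variable {α : Type*} [LinearOrder α]

theorem Equiv.swap_apply_lt_swap_apply_of_covBy {a b x y : α} (hab : a ⋖ b) (hxy : x < y)
    (h : ¬(x = a ∧ y = b)) : swap a b x < swap a b y := by
  have hlt := hab.lt
  have above_b : ∀ z, a < z → z ≠ b → b < z := fun z hz hzb =>
    lt_of_le_of_ne (hab.ge_of_gt hz) (Ne.symm hzb)
  have below_a : ∀ z, z < b → z ≠ a → z < a := fun z hz hza =>
    lt_of_le_of_ne (hab.le_of_lt hz) hza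
  rw [swap_apply_def, swap_apply_def]
  split_ifs <;> grind

theorem Finset.orderEmbOfFin_map_swap {s : Finset α} {k : ℕ} (h : s.card = k) {a b : α}
    (hab : a ⋖ b) (hs : ¬(a ∈ s ∧ b ∈ s)) (i : Fin k) :
    (s.map (swap a b).toEmbedding).orderEmbOfFin (by rw [card_map, h]) i
      = swap a b (s.orderEmbOfFin h i) := by
  have hmono : StrictMono (swap a b ∘ s.orderEmbOfFin h) := fun i j hij =>
    swap_apply_lt_swap_apply_of_covBy hab ((s.orderEmbOfFin h).strictMono hij) fun ⟨hi, hj⟩ =>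
      hs ⟨hi ▸ s.orderEmbOfFin_mem h i, hj ▸ s.orderEmbOfFin_mem h j⟩
  rw [← orderEmbOfFin_unique _ (fun i => mem_map_equiv.2 (by simp)) hmono]
  rfl

theorem Finset.exists_covBy_of_not_isLowerSet [IsStronglyCoatomic α] {s : Finset α}
    (hs : ¬IsLowerSet (s : Set α)) : ∃ a ∈ s, ∃ b ∉ s, b ⋖ a := by
  simp only [IsLowerSet, not_forall, mem_coe] at hs
  obtain ⟨a, c, hca, ha, hc⟩ := hs
  have hne : (s.filter (c < ·)).Nonempty :=
    ⟨a, mem_filter.2 ⟨ha, lt_of_le_of_ne hca fun h => hc (h ▸ ha)⟩⟩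
  obtain ⟨ha', hca'⟩ := mem_filter.1 ((s.filter (c < ·)).min'_mem hne)
  obtain ⟨b, hcb, hba'⟩ := exists_le_covBy_of_lt hca'
  refine ⟨_, ha', b, fun hb => ?_, hba'⟩
  have hcb' : c < b := lt_of_le_of_ne hcb fun h => hc (h ▸ hb)
  exact hba'.lt.not_ge ((s.filter (c < ·)).min'_le b (mem_filter.2 ⟨hb, hcb'⟩))

theorem Finset.eq_of_isLowerSet_of_card_eq {s t : Finset α} (hs : IsLowerSet (s : Set α))
    (ht : IsLowerSet (t : Set α)) (hst : s.card = t.card) : s = t := by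
  rcases hs.total ht with h | h
  · exact eq_of_subset_of_card_le (coe_subset.1 h) hst.ge
  · exact (eq_of_subset_of_card_le (coe_subset.1 h) hst.le).symm

end LinearOrder

abbrev Q (k n : ℕ) := {s : Finset (Fin n) // s.card = k}

namespace Q

variable {n k : ℕ}

def compl (s : Q k n) : Q (n - k) n := ⟨s.1ᶜ, by rw [card_compl, Fintype.card_fin, s.2]⟩

def map (σ : Perm (Fin n)) (s : Q k n) : Q k n := ⟨s.1.map σ.toEmbedding, by rw [card_map, s.2]⟩

def indexSum (s : Q k n) : ℕ := ∑ i ∈ s.1, ((i : ℕ) + 1)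

noncomputable def shuffleEquiv (s : Q k n) : Fin k ⊕ Fin (n - k) ≃ Fin n :=
  (sumCongr (s.1.orderIsoOfFin s.2).toEquiv
      ((s.1ᶜ.orderIsoOfFin s.compl.2).toEquiv.trans
        (subtypeEquivRight fun _ => mem_compl))).trans
    (sumCompl (· ∈ s.1))

theorem shuffleEquiv_inl (s : Q k n) (i : Fin k) :
    s.shuffleEquiv (.inl i) = s.1.orderEmbOfFin s.2 i :=
  rfl

theorem shuffleEquiv_inr (s : Q k n) (j : Fin (n - k)) :
    s.shuffleEquiv (.inr j) = s.1ᶜ.orderEmbOfFin s.compl.2 j :=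
  rfl

theorem mem_iff_exists_shuffleEquiv_inl (s : Q k n) {x : Fin n} :
    x ∈ s.1 ↔ ∃ i, s.shuffleEquiv (.inl i) = x := by
  rw [← mem_coe, ← range_orderEmbOfFin s.1 s.2]
  rfl

theorem shuffleEquiv_map_swap (t : Q k n) {a b : Fin n} (hab : b ⋖ a) (ha : a ∈ t.1)
    (hb : b ∉ t.1) : (t.map (swap b a)).shuffleEquiv = t.shuffleEquiv.trans (swap b a) := by
  have hcompl : (t.map (swap b a)).1ᶜ = t.1ᶜ.map (swap b a).toEmbedding := by
    ext x; simp [map]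
  refine Equiv.ext (Sum.rec (fun i => ?_) (fun j => ?_))
  · simp only [shuffleEquiv_inl, trans_apply]
    exact orderEmbOfFin_map_swap t.2 hab (by tauto) i
  · simp only [shuffleEquiv_inr, trans_apply, hcompl]
    exact orderEmbOfFin_map_swap t.compl.2 hab (by simp [compl, ha]) j

theorem indexSum_map_swap (t : Q k n) {a b : Fin n} (hab : b ⋖ a) (ha : a ∈ t.1)
    (hb : b ∉ t.1) : (t.map (swap b a)).indexSum + 1 = t.indexSum := by
  have hba : (b : ℕ) + 1 = a := by simpa using hab
  have hrest : ∀ x ∈ t.1.erase a, swap b a x = x := fun x hx =>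
    swap_apply_of_ne_of_ne (fun h => hb (h ▸ mem_of_mem_erase hx)) (ne_of_mem_erase hx)
  simp only [indexSum, map, sum_map, coe_toEmbedding]
  rw [← add_sum_erase _ _ ha, ← add_sum_erase _ _ ha, swap_apply_right,
    sum_congr rfl fun x hx => by rw [hrest x hx]]
  omega

noncomputable def shufflePerm (s t : Q k n) : Perm (Fin n) :=
  s.shuffleEquiv.symm.trans t.shuffleEquiv

theorem sign_shufflePerm_comm (s t : Q k n) :
    Perm.sign (shufflePerm t s) = Perm.sign (shufflePerm s t) := by
  rw [← Perm.sign_inv]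
  congr 1

theorem sign_shufflePerm_map_swap (s t : Q k n) {a b : Fin n} (hab : b ⋖ a) (ha : a ∈ t.1)
    (hb : b ∉ t.1) :
    Perm.sign (shufflePerm s (t.map (swap b a))) = -Perm.sign (shufflePerm s t) := by
  have hswap : shufflePerm s (t.map (swap b a)) = swap b a * shufflePerm s t := by
    rw [shufflePerm, shuffleEquiv_map_swap t hab ha hb]
    rfl
  rw [hswap, Perm.sign_mul, Perm.sign_swap hab.lt.ne, neg_one_mul]

theorem sign_shufflePerm (s t : Q k n) :
    Perm.sign (shufflePerm s t) = (-1) ^ (s.indexSum + t.indexSum) := by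
  obtain ⟨N, hN⟩ : ∃ N, s.indexSum + t.indexSum = N := ⟨_, rfl⟩
  induction N using Nat.strong_induction_on generalizing s t with
  | _ N ih =>
  wlog ht : ¬IsLowerSet (t.1 : Set (Fin n)) generalizing s t with H
  · by_cases hs : IsLowerSet (s.1 : Set (Fin n))
    · obtain rfl : s = t :=
        Subtype.ext (eq_of_isLowerSet_of_card_eq hs (not_not.1 ht) (s.2.trans t.2.symm))
      rw [shufflePerm, symm_trans_self, ← two_mul, pow_mul, neg_one_sq, one_pow]
      exact Perm.sign_one
    · rw [← sign_shufflePerm_comm, add_comm, H t s (by omega) hs]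
  obtain ⟨a, ha, b, hb, hab⟩ := exists_covBy_of_not_isLowerSet ht
  have hsum := t.indexSum_map_swap hab ha hb
  rw [← neg_neg (Perm.sign _), ← sign_shufflePerm_map_swap s t hab ha hb,
    ih (N - 1) (by omega) s _ (by omega), ← hsum, ← add_assoc, pow_succ]
  simp

noncomputable def blockPerm (β γ : Q k n) (π : Perm (Fin k)) (ρ : Perm (Fin (n - k))) :
    Perm (Fin n) :=
  β.shuffleEquiv.symm.trans ((sumCongr π ρ).trans γ.shuffleEquiv)

@[simp]
theorem blockPerm_shuffleEquiv (β γ : Q k n) (π : Perm (Fin k)) (ρ : Perm (Fin (n - k)))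
    (x : Fin k ⊕ Fin (n - k)) :
    blockPerm β γ π ρ (β.shuffleEquiv x) = γ.shuffleEquiv (sumCongr π ρ x) := by
  simp [blockPerm]

theorem sign_blockPerm (β γ : Q k n) (π : Perm (Fin k)) (ρ : Perm (Fin (n - k))) :
    Perm.sign (blockPerm β γ π ρ)
      = (-1) ^ (γ.indexSum + β.indexSum) * Perm.sign π * Perm.sign ρ := by
  have hsplit :
      blockPerm β γ π ρ = shufflePerm β γ * β.shuffleEquiv.permCongr (sumCongr π ρ) := by
    ext x
    simp [blockPerm, shufflePerm, permCongr_apply]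
  rw [hsplit, Perm.sign_mul, Perm.sign_permCongr, Perm.sign_sumCongr, sign_shufflePerm, add_comm,
    mul_assoc]

theorem map_blockPerm (β γ : Q k n) (π : Perm (Fin k)) (ρ : Perm (Fin (n - k))) :
    β.map (blockPerm β γ π ρ) = γ := by
  refine Subtype.ext (eq_of_subset_of_card_le (fun x hx => ?_)
    (by rw [(β.map (blockPerm β γ π ρ)).2, γ.2]))
  obtain ⟨y, hy, rfl⟩ := mem_map.1 hx
  obtain ⟨i, rfl⟩ := β.mem_iff_exists_shuffleEquiv_inl.1 hy
  exact γ.mem_iff_exists_shuffleEquiv_inl.2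
    ⟨π i, (blockPerm_shuffleEquiv β γ π ρ (.inl i)).symm⟩

theorem blockPerm_bijective (β : Q k n) :
    Function.Bijective fun x : Q k n × Perm (Fin k) × Perm (Fin (n - k)) =>
      blockPerm β x.1 x.2.1 x.2.2 := by
  refine ⟨fun ⟨γ, π, ρ⟩ ⟨γ', π', ρ'⟩ h => ?_, fun σ => ?_⟩
  · dsimp only at h
    obtain rfl : γ = γ' := by rw [← map_blockPerm β γ π ρ, h, map_blockPerm]
    have hsum : sumCongr π ρ = sumCongr π' ρ' := Equiv.ext fun x =>
      γ.shuffleEquiv.injective (by simpa using congr($h (β.shuffleEquiv x)))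
    obtain ⟨rfl, rfl⟩ := Prod.mk_inj.1 (Perm.sumCongrHom_injective hsum)
    rfl
  · set γ := β.map σ
    have hmaps : Set.MapsTo (β.shuffleEquiv.trans (σ.trans γ.shuffleEquiv.symm))
        (Set.range Sum.inl) (Set.range Sum.inl) := by
      rintro _ ⟨i, rfl⟩
      obtain ⟨j, hj⟩ := γ.mem_iff_exists_shuffleEquiv_inl.1
        (mem_map_of_mem _ (β.mem_iff_exists_shuffleEquiv_inl.2 ⟨i, rfl⟩))
      exact ⟨j, (eq_symm_apply _).2 hj⟩
    obtain ⟨⟨π, ρ⟩, hπρ⟩ := Perm.mem_sumCongrHom_range_of_perm_mapsTo_inl hmaps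
    refine ⟨⟨γ, π, ρ⟩, Equiv.ext fun x => ?_⟩
    simp [blockPerm, show sumCongr π ρ = _ from hπρ]

theorem prod_blockPerm {R : Type*} [CommMonoid R] (M : Matrix (Fin n) (Fin n) R)
    (β γ : Q k n) (π : Perm (Fin k)) (ρ : Perm (Fin (n - k))) :
    ∏ x, M (blockPerm β γ π ρ x) x
      = (∏ i, M.submatrix (emb γ.1 γ.2) (emb β.1 β.2) (π i) i)
        * ∏ j, M.submatrix (emb γ.compl.1 γ.compl.2) (emb β.compl.1 β.compl.2) (ρ j) j := by
  rw [← β.shuffleEquiv.prod_comp, Fintype.prod_sum_type]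
  simp only [blockPerm_shuffleEquiv, sumCongr_apply, Sum.map_inl, Sum.map_inr]
  rfl

end Q

theorem Matrix.det_eq_sum_mulCompound {R : Type*} [CommRing R] {n k : ℕ}
    (M : Matrix (Fin n) (Fin n) R) (β : Q k n) :
    M.det = ∑ γ : Q k n, (-1) ^ (γ.indexSum + β.indexSum)
      * mulCompound k M γ β * mulCompound (n - k) M γ.compl β.compl := by
  rw [det_apply, ← Fintype.sum_bijective _ β.blockPerm_bijective _ _ fun _ => rfl,
    Fintype.sum_prod_type]
  refine sum_congr rfl fun γ _ => ?_
  simp only [mulCompound, det_apply, Fintype.sum_prod_type, Q.sign_blockPerm, Q.prod_blockPerm,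
    Units.smul_def, zsmul_eq_mul, mul_sum, sum_mul]
  rw [sum_comm]
  refine sum_congr rfl fun ρ _ => sum_congr rfl fun π _ => ?_
  push_cast
  ring

theorem Umat_apply {R : Type*} [CommRing R] {n k : ℕ} (t : Q (n - k) n) (s : Q k n) :
    Umat R n k t s = if t = s.compl then (-1) ^ s.indexSum else 0 := by
  simp only [Umat, Q.compl, Q.indexSum, Subtype.ext_iff]

theorem Umat_transpose_mul_mul_Umat_apply {R : Type*} [CommRing R] {n k : ℕ}
    (D : Matrix (Q (n - k) n) (Q (n - k) n) R) (γ β : Q k n) :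
    ((Umat R n k)ᵀ * D * Umat R n k) γ β
      = (-1) ^ (γ.indexSum + β.indexSum) * D γ.compl β.compl := by
  simp only [mul_apply, transpose_apply, Umat_apply, mul_ite, mul_zero, ite_mul, zero_mul,
    sum_ite_eq', mem_univ, if_true, pow_add]
  ring

namespace Q

variable {n k : ℕ}

/-- `A.submatrix id (replaceCols α β)` is `A` with its columns `β` replaced by its columns `α`. -/
noncomputable def replaceCols (α β : Q k n) : Fin n → Fin n :=
  Sum.elim (α.shuffleEquiv ∘ .inl) (β.shuffleEquiv ∘ .inr) ∘ β.shuffleEquiv.symm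

theorem replaceCols_shuffleEquiv (α β : Q k n) (x : Fin k ⊕ Fin (n - k)) :
    replaceCols α β (β.shuffleEquiv x)
      = Sum.elim (α.shuffleEquiv ∘ .inl) (β.shuffleEquiv ∘ .inr) x := by
  simp [replaceCols]

theorem replaceCols_self (β : Q k n) : replaceCols β β = id := by
  rw [replaceCols, Sum.elim_comp_inl_inr, self_comp_symm]

theorem mulCompound_submatrix_replaceCols {R : Type*} [CommRing R]
    (A : Matrix (Fin n) (Fin n) R) (α β γ : Q k n) :
    mulCompound k (A.submatrix id (replaceCols α β)) γ β = mulCompound k A γ α := by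
  simp only [mulCompound, submatrix_submatrix]
  congr 2
  funext i
  exact replaceCols_shuffleEquiv α β (.inl i)

theorem mulCompound_compl_submatrix_replaceCols {R : Type*} [CommRing R]
    (A : Matrix (Fin n) (Fin n) R) (α β γ : Q k n) :
    mulCompound (n - k) (A.submatrix id (replaceCols α β)) γ.compl β.compl
      = mulCompound (n - k) A γ.compl β.compl := by
  simp only [mulCompound, submatrix_submatrix]
  congr 2
  funext j
  exact replaceCols_shuffleEquiv α β (.inr j)

theorem det_submatrix_replaceCols {R : Type*} [CommRing R] (A : Matrix (Fin n) (Fin n) R)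
    (α β : Q k n) :
    (A.submatrix id (replaceCols α β)).det = if α = β then A.det else 0 := by
  split_ifs with hαβ
  · rw [hαβ, replaceCols_self, submatrix_id_id]
  obtain ⟨x, hxα, hxβ⟩ : ∃ x ∈ α.1, x ∉ β.1 := not_subset.1 fun h =>
    hαβ (Subtype.ext (eq_of_subset_of_card_le h (by rw [α.2, β.2])))
  obtain ⟨i, rfl⟩ := α.mem_iff_exists_shuffleEquiv_inl.1 hxα
  obtain ⟨y | j, hj⟩ := β.shuffleEquiv.surjective (α.shuffleEquiv (.inl i))
  · exact absurd (hj ▸ β.mem_iff_exists_shuffleEquiv_inl.2 ⟨y, rfl⟩) hxβ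
  refine det_zero_of_column_eq (i := β.shuffleEquiv (.inl i)) (j := β.shuffleEquiv (.inr j))
    (by simp) fun r => ?_
  simp only [submatrix_apply, id_eq, replaceCols_shuffleEquiv, Sum.elim_inl, Sum.elim_inr]
  exact congrArg (A r) hj.symm

end Q

theorem mulCompound_duality_general {n k : ℕ} (A : Matrix (Fin n) (Fin n) ℂ) :
    (mulCompound k A)ᵀ * (Umat ℂ n k)ᵀ * mulCompound (n - k) A * Umat ℂ n k
      = A.det • (1 : Matrix {s : Finset (Fin n) // s.card = k}
          {s : Finset (Fin n) // s.card = k} ℂ) := by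
  ext (α : Q k n) (β : Q k n)
  set B := A.submatrix id (Q.replaceCols α β)
  calc _ = ∑ γ, mulCompound k A γ α
          * ((Umat ℂ n k)ᵀ * mulCompound (n - k) A * Umat ℂ n k) γ β := by
        rw [Matrix.mul_assoc, Matrix.mul_assoc, ← Matrix.mul_assoc (Umat ℂ n k)ᵀ, mul_apply]
        rfl
    _ = ∑ γ : Q k n, (-1) ^ (γ.indexSum + β.indexSum)
          * mulCompound k B γ β * mulCompound (n - k) B γ.compl β.compl := by
        simp only [Umat_transpose_mul_mul_Umat_apply, B, Q.mulCompound_submatrix_replaceCols,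
          Q.mulCompound_compl_submatrix_replaceCols]
        exact sum_congr rfl fun γ _ => by ring
    _ = B.det := (det_eq_sum_mulCompound B β).symm
    _ = (A.det • (1 : Matrix (Q k n) (Q k n) ℂ)) α β := by
        rw [Q.det_submatrix_replaceCols, Matrix.smul_apply, one_apply, smul_eq_mul, mul_ite,
          mul_one, mul_zero]

/-- duality of multiplicative compounds:
`(A^{(k)})ᵀ Uᵀ A^{(n-k)} U = det(A) · I`. -/
theorem mulCompound_duality {n k : ℕ} (hk1 : 1 ≤ k) (hk : k ≤ n - 1)
    (A : Matrix (Fin n) (Fin n) ℂ) :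
    (mulCompound k A)ᵀ * (Umat ℂ n k)ᵀ * mulCompound (n - k) A * Umat ℂ n k
      = A.det • (1 : Matrix {s : Finset (Fin n) // s.card = k}
          {s : Finset (Fin n) // s.card = k} ℂ) :=
  mulCompound_duality_general A
end

section
/- Duality of additive compounds: for A ∈ ℂ^{n×n}, k ∈ {1,…,n−1}, r = binom(n,k), and U the signed anti-diagonal matrix with u_{ij} = s(α^j) when i+j = r+1 and 0 otherwise, it holds that (A^{[k]})ᵀ + Uᵀ A^{[n−k]} U = tr(A) · I_r. -/
open Matrix Finset
open scoped ENNReal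

/-! Differentiating a minor of `1 + εA` by Jacobi's formula computes every entry of `A^{[k]}`:
at `(α, α)` it is `∑_{i ∈ α} a_ii`, at `(R ∪ {a}, R ∪ {b})` it is `± a_ab` with the sign
`(-1)^{#{x ∈ R | x < a} + #{x ∈ R | x < b}}`, and it vanishes when `α` and `β` differ in more
than one element. Conjugation by `U` moves the entry `(αᶜ, βᶜ)` of `A^{[n-k]}` to `(α, β)`, and
complements differ exactly where the sets do. On the diagonal the two traces add up to `tr A`.
Off the diagonal both terms are multiples of `a_ab`; since `R`, `(R ∪ {a, b})ᶜ`, `{a}` and `{b}`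
partition `Fin n`, counting the elements below `a` and below `b` shows the two signs are opposite.
-/

section Jacobi

variable {𝕜 ι : Type*} [NontriviallyNormedField 𝕜] [Fintype ι] [DecidableEq ι]

theorem hasDerivAt_det_add_smul (C D : Matrix ι ι 𝕜) (x : 𝕜) :
    HasDerivAt (fun ε : 𝕜 => (C + ε • D).det)
      (∑ p, ((C + x • D).updateCol p (fun i => D i p)).det) x := by
  simp only [det_apply', Matrix.add_apply, Matrix.smul_apply, smul_eq_mul]
  have hprod (σ : Equiv.Perm ι) : HasDerivAt (fun ε : 𝕜 => ∏ i, (C (σ i) i + ε * D (σ i) i))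
      (∑ p, (∏ j ∈ univ.erase p, (C (σ j) j + x * D (σ j) j)) * D (σ p) p) x :=
    HasDerivAt.fun_finsetProd fun i _ =>
      ((hasDerivAt_id x).mul_const _).const_add _ |>.congr_deriv (one_mul _)
  refine (HasDerivAt.fun_sum fun σ _ => (hprod σ).const_mul ((Equiv.Perm.sign σ : ℤ) : 𝕜))
    |>.congr_deriv ?_
  simp_rw [Finset.mul_sum]
  rw [Finset.sum_comm]
  refine Finset.sum_congr rfl fun p _ => Finset.sum_congr rfl fun σ _ => ?_
  rw [← Finset.mul_prod_erase _ _ (Finset.mem_univ p),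
    Finset.prod_congr rfl fun j hj => updateCol_ne (Finset.ne_of_mem_erase hj)]
  simp [mul_comm]

end Jacobi

section OneSubmatrix

variable {R ι : Type*} [CommRing R] [DecidableEq ι]

theorem det_one_updateCol {m : Type*} [Fintype m] [DecidableEq m] (p : m) (v : m → R) :
    ((1 : Matrix m m R).updateCol p v).det = v p := by
  simpa [Matrix.one_apply] using det_updateCol_sum (1 : Matrix m m R) p v

theorem det_one_submatrix_updateCol_eq_zero {k : ℕ} (f g : Fin k → ι) {p q : Fin k}
    (hqp : q ≠ p) (hq : g q ∉ Set.range f) (v : Fin k → R) :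
    (((1 : Matrix ι ι R).submatrix f g).updateCol p v).det = 0 :=
  det_eq_zero_of_column_eq_zero q fun i => by
    rw [updateCol_ne hqp, submatrix_apply, one_apply_ne fun h => hq ⟨i, h⟩]

/-- Laplace expansion along column `q`: of all the minors only the one deleting row `p`
survives, and it is the identity. -/
theorem det_one_submatrix_updateCol {m : ℕ} {f g : Fin (m + 1) → ι} {e : Fin m → ι}
    (he : e.Injective) {p q : Fin (m + 1)} (hfp : f ∘ p.succAbove = e)
    (hgq : g ∘ q.succAbove = e) (hp : f p ∉ Set.range e) (v : Fin (m + 1) → R) :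
    (((1 : Matrix ι ι R).submatrix f g).updateCol q v).det = (-1) ^ (p + q : ℕ) * v p := by
  have hminor (i : Fin (m + 1)) :
      (((1 : Matrix ι ι R).submatrix f g).updateCol q v).submatrix i.succAbove q.succAbove
        = (1 : Matrix ι ι R).submatrix (f ∘ i.succAbove) e := by
    ext r c
    rw [submatrix_apply, updateCol_ne (Fin.succAbove_ne q c), submatrix_apply, submatrix_apply,
      ← hgq, Function.comp_apply, Function.comp_apply]
  rw [det_succ_column _ q, Fintype.sum_eq_single p fun i hip => ?_]
  · rw [hminor, hfp, submatrix_one e he, det_one, updateCol_self, mul_one]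
  obtain ⟨r, hr⟩ := Fin.exists_succAbove_eq hip.symm
  rw [hminor, det_eq_zero_of_row_eq_zero r fun c => ?_, mul_zero]
  rw [submatrix_apply, Function.comp_apply, hr, one_apply_ne fun h => hp ⟨c, h.symm⟩]

end OneSubmatrix

namespace Finset

theorem two_le_card_sdiff_or_exists_eq_insert {α : Type*} [DecidableEq α] {s t : Finset α}
    (hcard : #s = #t) (hst : s ≠ t) :
    2 ≤ #(s \ t) ∨ ∃ a b R, a ∉ R ∧ b ∉ R ∧ a ≠ b ∧ s = insert a R ∧ t = insert b R := by
  refine or_iff_not_imp_left.2 fun h2 => ?_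
  have h1 : #(s \ t) = 1 := by
    have : #(s \ t) ≠ 0 := fun h0 =>
      hst (eq_of_subset_of_card_le (sdiff_eq_empty_iff_subset.1 (card_eq_zero.1 h0)) hcard.ge)
    omega
  obtain ⟨a, ha⟩ := card_eq_one.1 h1
  obtain ⟨b, hb⟩ := card_eq_one.1 ((card_sdiff_comm hcard).symm.trans h1)
  have has : a ∈ s \ t := ha ▸ mem_singleton_self a
  have hbt : b ∈ t \ s := hb ▸ mem_singleton_self b
  rw [mem_sdiff] at has hbt
  refine ⟨a, b, s ∩ t, fun h => has.2 (mem_inter.1 h).2, fun h => hbt.2 (mem_inter.1 h).1,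
    fun h => has.2 (h ▸ hbt.1), ?_, ?_⟩
  · rw [insert_eq, ← ha, sdiff_union_inter]
  · rw [inter_comm, insert_eq, ← hb, sdiff_union_inter]

variable {α : Type*} [LinearOrder α] {k : ℕ}

theorem card_filter_lt_orderEmbOfFin (s : Finset α) (h : s.card = k) (i : Fin k) :
    #(s.filter (· < s.orderEmbOfFin h i)) = i := by
  have : s.filter (· < s.orderEmbOfFin h i) = (Iio i).map (s.orderEmbOfFin h).toEmbedding := by
    ext x
    simp only [mem_filter, mem_map, mem_Iio, RelEmbedding.coe_toEmbedding]
    constructor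
    · rintro ⟨hx, hxi⟩
      obtain ⟨j, rfl⟩ : x ∈ Set.range (s.orderEmbOfFin h) := by simpa using hx
      exact ⟨j, (s.orderEmbOfFin h).lt_iff_lt.1 hxi, rfl⟩
    · rintro ⟨j, hji, rfl⟩
      exact ⟨orderEmbOfFin_mem s h j, (s.orderEmbOfFin h).lt_iff_lt.2 hji⟩
  rw [this, card_map, Fin.card_Iio]

theorem card_filter_lt_eq_of_orderEmbOfFin_insert {R : Finset α} {a : α}
    (h : (insert a R).card = k) {p : Fin k} (hp : (insert a R).orderEmbOfFin h p = a) :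
    #(R.filter (· < a)) = p := by
  rw [← card_filter_lt_orderEmbOfFin _ h p, hp, filter_insert, if_neg (lt_irrefl a)]

theorem orderEmbOfFin_insert_comp_succAbove {R : Finset α} {a : α}
    (h : (insert a R).card = R.card + 1) {p : Fin (R.card + 1)}
    (hp : (insert a R).orderEmbOfFin h p = a) :
    (insert a R).orderEmbOfFin h ∘ p.succAbove = R.orderEmbOfFin rfl := by
  refine orderEmbOfFin_unique rfl (fun j => ?_) ((orderEmbOfFin _ h).strictMono.comp
    (Fin.strictMono_succAbove p))
  have hne : (insert a R).orderEmbOfFin h (p.succAbove j) ≠ a := fun hj =>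
    Fin.succAbove_ne p j ((orderEmbOfFin _ h).injective (hj.trans hp.symm))
  exact (mem_insert.1 (orderEmbOfFin_mem _ h _)).resolve_left hne

variable {n : ℕ}

theorem card_filter_lt_add_card_filter_lt_compl (X : Finset (Fin n)) (c : Fin n) :
    #(X.filter (· < c)) + #(Xᶜ.filter (· < c)) = c := by
  rw [← card_union_of_disjoint (disjoint_filter_filter disjoint_compl_right), ← filter_union,
    union_compl, filter_gt_eq_Iio, Fin.card_Iio]

theorem card_filter_lt_insert {X : Finset (Fin n)} {x : Fin n} (hx : x ∉ X) (c : Fin n) :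
    #((insert x X).filter (· < c)) = #(X.filter (· < c)) + if x < c then 1 else 0 := by
  rw [filter_insert]
  split_ifs with hxc
  · exact card_insert_of_notMem fun h => hx (mem_filter.1 h).1
  · rfl

end Finset

section Compound

variable {n k : ℕ}

def complCard (s : {s : Finset (Fin n) // s.card = k}) : {t : Finset (Fin n) // t.card = n - k} :=
  ⟨s.1ᶜ, by rw [card_compl, s.2, Fintype.card_fin]⟩

theorem transpose_Umat_mul_mul_Umat_apply {R : Type*} [CommRing R]
    (M : Matrix {t : Finset (Fin n) // t.card = n - k} {t : Finset (Fin n) // t.card = n - k} R)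
    (s t : {s : Finset (Fin n) // s.card = k}) :
    ((Umat R n k)ᵀ * M * Umat R n k) s t = (-1) ^ (∑ i ∈ s.1, ((i : ℕ) + 1))
      * M (complCard s) (complCard t) * (-1) ^ (∑ i ∈ t.1, ((i : ℕ) + 1)) := by
  have hU (u) (s : {s : Finset (Fin n) // s.card = k}) : Umat R n k u s =
      if u = complCard s then (-1) ^ (∑ i ∈ s.1, ((i : ℕ) + 1)) else 0 := by
    simp only [Umat, complCard, Subtype.ext_iff]
  simp only [mul_apply, transpose_apply, hU, ite_mul, mul_ite, zero_mul, mul_zero, sum_ite_eq',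
    mem_univ, if_true]

variable {𝕜 : Type*} [RCLike 𝕜] (A : Matrix (Fin n) (Fin n) 𝕜)

theorem addCompound_apply (s t : {s : Finset (Fin n) // s.card = k}) :
    addCompound k A s t = ∑ p, (((1 : Matrix (Fin n) (Fin n) 𝕜).submatrix
      (s.1.orderEmbOfFin s.2) (t.1.orderEmbOfFin t.2)).updateCol p
        fun i => A (s.1.orderEmbOfFin s.2 i) (t.1.orderEmbOfFin t.2 p)).det := by
  have hminor : (fun ε : 𝕜 => mulCompound k (1 + ε • A) s t) = fun ε =>
      ((1 : Matrix (Fin n) (Fin n) 𝕜).submatrix (s.1.orderEmbOfFin s.2) (t.1.orderEmbOfFin t.2)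
        + ε • A.submatrix (s.1.orderEmbOfFin s.2) (t.1.orderEmbOfFin t.2)).det := by
    ext ε
    rw [mulCompound, submatrix_add, submatrix_smul]
    rfl
  rw [addCompound, hminor, (hasDerivAt_det_add_smul _ _ 0).deriv, zero_smul, add_zero]
  rfl

theorem addCompound_apply_self (s : {s : Finset (Fin n) // s.card = k}) :
    addCompound k A s s = ∑ x ∈ s.1, A x x := by
  rw [addCompound_apply, submatrix_one _ (s.1.orderEmbOfFin s.2).injective]
  simp_rw [det_one_updateCol]
  conv_rhs => rw [← image_orderEmbOfFin_univ s.1 s.2]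
  rw [sum_image fun i _ j _ hij => (s.1.orderEmbOfFin s.2).injective hij]

theorem addCompound_apply_eq_zero {s t : {s : Finset (Fin n) // s.card = k}}
    (h : 2 ≤ #(t.1 \ s.1)) : addCompound k A s t = 0 := by
  rw [addCompound_apply]
  refine sum_eq_zero fun p _ => ?_
  obtain ⟨y, hy, hyp⟩ := exists_mem_ne h (t.1.orderEmbOfFin t.2 p)
  rw [mem_sdiff] at hy
  obtain ⟨q, rfl⟩ : y ∈ Set.range (t.1.orderEmbOfFin t.2) := by simpa using hy.1
  refine det_one_submatrix_updateCol_eq_zero _ _ (fun hqp => hyp (congrArg _ hqp)) ?_ _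
  simpa using hy.2

theorem addCompound_apply_of_eq_insert {s t : {s : Finset (Fin n) // s.card = k}}
    {R : Finset (Fin n)} {a b : Fin n} (ha : a ∉ R) (hb : b ∉ R) (hab : a ≠ b)
    (hs : s.1 = insert a R) (ht : t.1 = insert b R) :
    addCompound k A s t = (-1) ^ (#(R.filter (· < a)) + #(R.filter (· < b))) * A a b := by
  obtain ⟨s, hsk⟩ := s
  obtain ⟨t, htk⟩ := t
  subst hs ht
  obtain rfl : k = #R + 1 := by rw [← hsk, card_insert_of_notMem ha]
  obtain ⟨p, hp⟩ : a ∈ Set.range ((insert a R).orderEmbOfFin hsk) := by simp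
  obtain ⟨q, hq⟩ : b ∈ Set.range ((insert b R).orderEmbOfFin htk) := by simp
  rw [addCompound_apply, Fintype.sum_eq_single q fun p' hp' =>
      det_one_submatrix_updateCol_eq_zero _ _ hp'.symm (by simp [hq, hab.symm, hb]) _,
    det_one_submatrix_updateCol (R.orderEmbOfFin rfl).injective
      (orderEmbOfFin_insert_comp_succAbove hsk hp) (orderEmbOfFin_insert_comp_succAbove htk hq)
      (by simpa [hp]), hp, card_filter_lt_eq_of_orderEmbOfFin_insert hsk hp,
    card_filter_lt_eq_of_orderEmbOfFin_insert htk hq]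
  exact congrArg _ (congrArg _ hq)

theorem addCompound_duality_apply_of_eq_insert {s t : {s : Finset (Fin n) // s.card = k}}
    {R : Finset (Fin n)} {a b : Fin n} (ha : a ∉ R) (hb : b ∉ R) (hab : a ≠ b)
    (hs : s.1 = insert a R) (ht : t.1 = insert b R) :
    addCompound k A t s + (-1) ^ (∑ i ∈ s.1, ((i : ℕ) + 1))
      * addCompound (n - k) A (complCard s) (complCard t) * (-1) ^ (∑ i ∈ t.1, ((i : ℕ) + 1))
      = 0 := by
  set R' := (insert a (insert b R))ᶜ
  have haR' : a ∉ R' := by simp [R']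
  have hbR' : b ∉ R' := by simp [R']
  have hRc : Rᶜ = insert a (insert b R') := by
    ext x; simp only [R', mem_compl, mem_insert]; grind
  have hsc : (complCard s).1 = insert b R' := by
    ext x; simp only [complCard, R', hs, mem_compl, mem_insert]; grind
  have htc : (complCard t).1 = insert a R' := by
    ext x; simp only [complCard, R', ht, mem_compl, mem_insert]; grind
  rw [addCompound_apply_of_eq_insert A hb ha hab.symm ht hs,
    addCompound_apply_of_eq_insert A hbR' haR' hab.symm hsc htc, hs, ht, sum_insert ha,
    sum_insert hb]
  have hcount_a := card_filter_lt_add_card_filter_lt_compl R a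
  have hcount_b := card_filter_lt_add_card_filter_lt_compl R b
  rw [hRc, card_filter_lt_insert (by simp [hab, haR']), card_filter_lt_insert hbR']
    at hcount_a hcount_b
  set σR := ∑ x ∈ R, ((x : ℕ) + 1)
  set e := #(R.filter (· < b)) + #(R.filter (· < a))
  set e' := #(R'.filter (· < b)) + #(R'.filter (· < a))
  have hexp : (a + 1 + σR) + e' + (b + 1 + σR) = 2 * (σR + e' + 1) + e + 1 := by
    simp only [lt_irrefl, if_false, add_zero] at hcount_a hcount_b
    rcases hab.lt_or_gt with h | h
    · simp only [h, h.not_gt, if_true, if_false] at hcount_a hcount_b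
      omega
    · simp only [h, h.not_gt, if_true, if_false] at hcount_a hcount_b
      omega
  calc _ = (-1) ^ e * A b a + (-1) ^ ((a + 1 + σR) + e' + (b + 1 + σR)) * A b a := by ring
    _ = (-1) ^ e * A b a + (-1) ^ (2 * (σR + e' + 1)) * (-1) ^ e * (-1) * A b a := by
      rw [hexp, pow_succ, pow_add (-1 : 𝕜) (2 * _) e]
    _ = 0 := by rw [pow_mul, neg_one_sq, one_pow]; ring

end Compound

theorem addCompound_duality_general {n k : ℕ} (A : Matrix (Fin n) (Fin n) ℂ) :
    (addCompound k A)ᵀ + (Umat ℂ n k)ᵀ * addCompound (n - k) A * Umat ℂ n k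
      = A.trace • (1 : Matrix {s : Finset (Fin n) // s.card = k}
          {s : Finset (Fin n) // s.card = k} ℂ) := by
  ext s t
  rw [Matrix.add_apply, transpose_apply, transpose_Umat_mul_mul_Umat_apply, Matrix.smul_apply,
    one_apply]
  by_cases hst : s = t
  · subst hst
    rw [if_pos rfl, smul_eq_mul, mul_one, addCompound_apply_self, addCompound_apply_self,
      mul_right_comm, ← pow_add, Even.neg_one_pow ⟨_, rfl⟩, one_mul]
    exact sum_add_sum_compl s.1 fun x => A x x
  rw [if_neg hst, smul_zero]
  obtain h | ⟨a, b, R, ha, hb, hab, hs, ht⟩ :=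
    two_le_card_sdiff_or_exists_eq_insert (s.2.trans t.2.symm) (mt Subtype.ext hst)
  · rw [addCompound_apply_eq_zero A h, addCompound_apply_eq_zero A (by
      rwa [complCard, complCard, compl_sdiff_compl]), mul_zero, zero_mul, zero_add]
  · exact addCompound_duality_apply_of_eq_insert A ha hb hab hs ht

/-- duality of additive compounds:
`(A^{[k]})ᵀ + Uᵀ A^{[n-k]} U = tr(A) · I`. -/
theorem addCompound_duality {n k : ℕ} (hk1 : 1 ≤ k) (hk : k ≤ n - 1)
    (A : Matrix (Fin n) (Fin n) ℂ) :
    (addCompound k A)ᵀ + (Umat ℂ n k)ᵀ * addCompound (n - k) A * Umat ℂ n k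
      = A.trace • (1 : Matrix {s : Finset (Fin n) // s.card = k}
          {s : Finset (Fin n) // s.card = k} ℂ) :=
  addCompound_duality_general A
end

section
/- If for A ∈ ℝ^{n×n} there exist an invertible T, k ∈ {1,…,n}, and q ∈ {1,2,∞} such that tr(A) + (n−k) μ_{q,T}(−A) < 0, then every sum of k eigenvalues of A (i.e., ∑_{i∈α} λ_i for any α ∈ Q(k,n)) has negative real part. -/
open Matrix Finset
open scoped ENNReal

/-!
Let `M = T (-A) T⁻¹`. If `λ` is an eigenvalue of `A`, then `-λ` is an eigenvalue of `M`, and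
`1 - hλ` is an eigenvalue of `1 + hM`. For a complex eigenvalue of a real operator the modulus is
still bounded by the operator norm, so `1 - h Re λ ≤ ‖1 + hM‖_q`; since `h ↦ ‖1 + hM‖_q` is convex,
its difference quotients at `0⁺` converge to `μ_q(M)`, giving `-Re λ ≤ μ_q(M)`. Summing over the
`n - k` eigenvalues not in the chosen `k`-subset and using that all `n` eigenvalues sum to `tr A`,
the real part of the chosen sum is at most `tr A + (n - k) μ_q(M) < 0`.
-/

open Filter Topology

theorem ContinuousLinearMap.norm_le_opNorm_of_complex_eigenvector {E : Type*}
    [NormedAddCommGroup E] [NormedSpace ℝ E] (L : E →L[ℝ] E) (μ : ℂ) {x y : E}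
    (hxy : x ≠ 0 ∨ y ≠ 0) (hx : L x = μ.re • x - μ.im • y) (hy : L y = μ.im • x + μ.re • y) :
    ‖μ‖ ≤ ‖L‖ := by
  -- `w θ = Re (e^{iθ} (x + iy))`; `L` maps this curve to itself, shifted by `arg μ` and scaled
  -- by `‖μ‖`, so comparing suprema of `‖w‖` gives the bound.
  set w : ℝ → E := fun θ => Real.cos θ • x - Real.sin θ • y
  have hLw : ∀ θ, L (w θ) = ‖μ‖ • w (θ + μ.arg) := by
    intro θ
    simp only [w, map_sub, map_smul, hx, hy, Real.cos_add, Real.sin_add]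
    rw [← Complex.norm_mul_cos_arg μ, ← Complex.norm_mul_sin_arg μ]
    module
  have hbdd : BddAbove (Set.range fun θ => ‖w θ‖) := by
    refine ⟨‖x‖ + ‖y‖, ?_⟩
    rintro _ ⟨θ, rfl⟩
    calc ‖w θ‖ ≤ ‖Real.cos θ • x‖ + ‖Real.sin θ • y‖ := norm_sub_le _ _
      _ ≤ ‖x‖ + ‖y‖ := by
        simp only [norm_smul, Real.norm_eq_abs]
        gcongr
        · exact mul_le_of_le_one_left (norm_nonneg _) (Real.abs_cos_le_one θ)
        · exact mul_le_of_le_one_left (norm_nonneg _) (Real.abs_sin_le_one θ)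
  set S := ⨆ θ, ‖w θ‖
  have hS : 0 < S := by
    rcases hxy with hx0 | hy0
    · exact (norm_pos_iff.2 hx0).trans_le (by simpa [w] using le_ciSup hbdd 0)
    · exact (norm_pos_iff.2 hy0).trans_le (by simpa [w] using le_ciSup hbdd (Real.pi / 2))
  have hw_le : ∀ ψ, ‖μ‖ * ‖w ψ‖ ≤ ‖L‖ * S := fun ψ => calc
    ‖μ‖ * ‖w ψ‖ = ‖L (w (ψ - μ.arg))‖ := by rw [hLw, sub_add_cancel, norm_smul, norm_norm]
    _ ≤ ‖L‖ * ‖w (ψ - μ.arg)‖ := L.le_opNorm _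
    _ ≤ ‖L‖ * S := by gcongr; exact le_ciSup hbdd _
  have hS_le : ‖μ‖ * S ≤ ‖L‖ * S := by
    rw [Real.mul_iSup_of_nonneg (norm_nonneg _)]
    exact ciSup_le hw_le
  exact le_of_mul_le_mul_right hS_le hS

section
variable {ι : Type*} [Fintype ι]

lemma Matrix.re_map_algebraMap_mulVec (M : Matrix ι ι ℝ) (v : ι → ℂ) (i : ι) :
    ((M.map (algebraMap ℝ ℂ) *ᵥ v) i).re = (M *ᵥ fun j => (v j).re) i := by
  simp [mulVec, dotProduct, Complex.re_sum]

lemma Matrix.im_map_algebraMap_mulVec (M : Matrix ι ι ℝ) (v : ι → ℂ) (i : ι) :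
    ((M.map (algebraMap ℝ ℂ) *ᵥ v) i).im = (M *ᵥ fun j => (v j).im) i := by
  simp [mulVec, dotProduct, Complex.im_sum]

variable [DecidableEq ι] (p : ℝ≥0∞) (hp : 1 ≤ p)

lemma pOpNorm_eq_norm_toLpLin [Fact (1 ≤ p)] (M : Matrix ι ι ℝ) :
    pOpNorm p hp M = ‖LinearMap.toContinuousLinearMap (toLpLin p p M)‖ := rfl

lemma norm_le_pOpNorm_of_mulVec_eq_smul (M : Matrix ι ι ℝ) {μ : ℂ} {v : ι → ℂ}
    (hv : v ≠ 0) (hMv : M.map (algebraMap ℝ ℂ) *ᵥ v = μ • v) : ‖μ‖ ≤ pOpNorm p hp M := by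
  have : Fact (1 ≤ p) := ⟨hp⟩
  rw [pOpNorm_eq_norm_toLpLin]
  refine ContinuousLinearMap.norm_le_opNorm_of_complex_eigenvector _ μ
    (x := WithLp.toLp p fun j => (v j).re) (y := WithLp.toLp p fun j => (v j).im) ?_ ?_ ?_
  · by_contra! h
    refine hv (funext fun i => Complex.ext ?_ ?_)
    · simpa using congrFun (congrArg WithLp.ofLp h.1) i
    · simpa using congrFun (congrArg WithLp.ofLp h.2) i
  · ext i
    simpa [toLpLin_apply, ← Matrix.re_map_algebraMap_mulVec] using
      congrArg Complex.re (congrFun hMv i)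
  · ext i
    simpa [toLpLin_apply, ← Matrix.im_map_algebraMap_mulVec, add_comm] using
      congrArg Complex.im (congrFun hMv i)

lemma pOpNorm_one [Nonempty ι] : pOpNorm p hp (1 : Matrix ι ι ℝ) = 1 := by
  have : Fact (1 ≤ p) := ⟨hp⟩
  rw [pOpNorm_eq_norm_toLpLin, toLpLin_one]
  exact ContinuousLinearMap.norm_id (𝕜 := ℝ) (E := WithLp p (ι → ℝ))

lemma convexOn_pOpNorm_one_add_smul (M : Matrix ι ι ℝ) :
    ConvexOn ℝ Set.univ fun h : ℝ => pOpNorm p hp (1 + h • M) := by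
  have : Fact (1 ≤ p) := ⟨hp⟩
  let Φ := (toLpLin p p).trans (LinearMap.toContinuousLinearMap (𝕜 := ℝ) (E := WithLp p (ι → ℝ))
    (F' := WithLp p (ι → ℝ)))
  have h := (convexOn_univ_norm.translate_right (Φ 1)).comp_linearMap
    (LinearMap.toSpanSingleton ℝ _ (Φ M))
  simp only [Set.preimage_univ] at h
  refine h.congr fun t _ => ?_
  simp [pOpNorm_eq_norm_toLpLin, Φ]

lemma tendsto_logNorm [Nonempty ι] (M : Matrix ι ι ℝ) :
    Tendsto (fun h : ℝ => (pOpNorm p hp (1 + h • M) - 1) / h) (𝓝[>] 0)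
      (𝓝 (logNorm p hp M)) := by
  have hderiv := (convexOn_pOpNorm_one_add_smul p hp M).hasDerivWithinAt_sInf_slope_of_mem_interior
    (x := 0) (by simp)
  rw [hasDerivWithinAt_iff_tendsto_slope, Set.sdiff_singleton_eq_self (by simp)] at hderiv
  have hslope : slope (fun h : ℝ => pOpNorm p hp (1 + h • M)) 0 =
      fun h : ℝ => (pOpNorm p hp (1 + h • M) - 1) / h := by
    funext h
    simp [slope_def_field, pOpNorm_one]
  rw [hslope] at hderiv
  rwa [logNorm, hderiv.limUnder_eq]

lemma re_le_logNorm_of_mulVec_eq_smul (M : Matrix ι ι ℝ) {μ : ℂ} {v : ι → ℂ}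
    (hv : v ≠ 0) (hMv : M.map (algebraMap ℝ ℂ) *ᵥ v = μ • v) : μ.re ≤ logNorm p hp M := by
  obtain ⟨i, -⟩ := Function.ne_iff.1 hv
  have : Nonempty ι := ⟨i⟩
  refine ge_of_tendsto (tendsto_logNorm p hp M) ?_
  filter_upwards [self_mem_nhdsWithin] with h (hh : 0 < h)
  have hshift : (1 + h • M).map (algebraMap ℝ ℂ) *ᵥ v = (1 + h * μ) • v := by
    have hmap : (1 + h • M).map (algebraMap ℝ ℂ) = 1 + (h : ℂ) • M.map (algebraMap ℝ ℂ) := by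
      ext i j
      by_cases hij : i = j <;> simp [hij, one_apply]
    rw [hmap, add_mulVec, one_mulVec, smul_mulVec, hMv, smul_smul, add_smul, one_smul]
  rw [le_div_iff₀ hh]
  calc μ.re * h = (1 + h * μ).re - 1 := by simp; ring
    _ ≤ ‖1 + h * μ‖ - 1 := by gcongr; exact Complex.re_le_norm _
    _ ≤ pOpNorm p hp (1 + h • M) - 1 := by
      gcongr; exact norm_le_pOpNorm_of_mulVec_eq_smul p hp _ hv hshift

lemma Matrix.exists_mulVec_eq_smul_of_mem_spectrum {M : Matrix ι ι ℂ} {μ : ℂ}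
    (hμ : μ ∈ spectrum ℂ M) : ∃ v ≠ 0, M *ᵥ v = μ • v := by
  rw [← spectrum_toLin', ← Module.End.hasEigenvalue_iff_mem_spectrum] at hμ
  obtain ⟨v, hv⟩ := hμ.exists_hasEigenvector
  exact ⟨v, hv.2, by simpa using hv.apply_eq_smul⟩

lemma re_le_logNorm_of_mem_spectrum (M : Matrix ι ι ℝ) {μ : ℂ}
    (hμ : μ ∈ spectrum ℂ (M.map (algebraMap ℝ ℂ))) : μ.re ≤ logNorm p hp M := by
  obtain ⟨v, hv, hMv⟩ := Matrix.exists_mulVec_eq_smul_of_mem_spectrum hμ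
  exact re_le_logNorm_of_mulVec_eq_smul p hp M hv hMv

lemma neg_mem_spectrum_map_conj_neg {A T : Matrix ι ι ℝ} (hT : IsUnit T) {lam : ℂ}
    (hlam : lam ∈ spectrum ℂ (A.map (algebraMap ℝ ℂ))) :
    -lam ∈ spectrum ℂ ((T * -A * T⁻¹).map (algebraMap ℝ ℂ)) := by
  let u := Units.map (algebraMap ℝ ℂ).mapMatrix.toMonoidHom hT.unit
  have hconj : (T * -A * T⁻¹).map (algebraMap ℝ ℂ) =
      u * -(A.map (algebraMap ℝ ℂ)) * (↑u⁻¹ : Matrix ι ι ℂ) := by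
    change (algebraMap ℝ ℂ).mapMatrix (T * -A * T⁻¹) = _
    rw [map_mul, map_mul, map_neg]
    simp [u, Units.coe_map_inv, Matrix.coe_units_inv]
  rw [hconj, spectrum.units_conjugate, ← spectrum.neg_eq]
  simpa using hlam

end

section
variable {ι K L : Type*} [Fintype ι] [DecidableEq ι] [Field K] [Field L] [Algebra K L]
  (A : Matrix ι ι K)

lemma Matrix.mem_spectrum_map_of_mem_roots_charpoly_map {μ : L}
    (hμ : μ ∈ (A.charpoly.map (algebraMap K L)).roots) :
    μ ∈ spectrum L (A.map (algebraMap K L)) := by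
  rw [mem_spectrum_iff_isRoot_charpoly, charpoly_map]
  exact Polynomial.isRoot_of_mem_roots hμ

variable [IsAlgClosed L]

lemma Matrix.card_roots_charpoly_map :
    Multiset.card (A.charpoly.map (algebraMap K L)).roots = Fintype.card ι := by
  rw [Polynomial.splits_iff_card_roots.mp (IsAlgClosed.splits _),
    A.charpoly_monic.natDegree_map, A.charpoly_natDegree_eq_dim]

lemma Matrix.sum_roots_charpoly_map :
    (A.charpoly.map (algebraMap K L)).roots.sum = algebraMap K L A.trace := by
  rw [← charpoly_map, ← trace_eq_sum_roots_charpoly, AddMonoidHom.map_trace]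

end

lemma Multiset.card_nsmul_le_re_sum {s : Multiset ℂ} {c : ℝ} (h : ∀ z ∈ s, c ≤ z.re) :
    card s • c ≤ s.sum.re := by
  rw [← Complex.coe_reAddGroupHom, map_multiset_sum]
  simpa using card_nsmul_le_sum (s := s.map Complex.reAddGroupHom) (a := c) (by simpa using h)

theorem eigenvalue_sums_negative_general {n k : ℕ} (hkn : k ≤ n) (q : ℝ≥0∞) (hq1 : 1 ≤ q)
    (A T : Matrix (Fin n) (Fin n) ℝ) (hT : IsUnit T)
    (hneg : A.trace + ((n : ℝ) - (k : ℝ)) * logNorm q hq1 (T * (-A) * T⁻¹) < 0) :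
    ∀ mus : Multiset ℂ, mus ≤ (A.charpoly.map (algebraMap ℝ ℂ)).roots →
      Multiset.card mus = k → (mus.sum).re < 0 := by
  intro mus hsub hcard
  set rest := (A.charpoly.map (algebraMap ℝ ℂ)).roots - mus
  have hcard_rest : Multiset.card rest = n - k := by
    rw [Multiset.card_sub hsub, A.card_roots_charpoly_map, Fintype.card_fin, hcard]
  have hrest : ∀ lam ∈ rest, -logNorm q hq1 (T * -A * T⁻¹) ≤ lam.re := fun lam hlam => by
    have := re_le_logNorm_of_mem_spectrum q hq1 _ <| neg_mem_spectrum_map_conj_neg hT <|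
      A.mem_spectrum_map_of_mem_roots_charpoly_map (Multiset.mem_of_le tsub_le_self hlam)
    rwa [Complex.neg_re, neg_le] at this
  have hsplit : mus.sum.re + rest.sum.re = A.trace := by
    rw [← Complex.add_re, ← Multiset.sum_add, add_tsub_cancel_of_le hsub,
      A.sum_roots_charpoly_map, Complex.coe_algebraMap, Complex.ofReal_re]
  have hrest_sum := Multiset.card_nsmul_le_re_sum hrest
  rw [hcard_rest, nsmul_eq_mul, Nat.cast_sub hkn] at hrest_sum
  linarith

/-- if `tr A + (n-k) μ_{q,T}(-A) < 0` for some invertible `T`, `k`, and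
`q ∈ {1,2,∞}`, then every sum of `k` eigenvalues of `A` (with multiplicity) has negative
real part. -/
theorem eigenvalue_sums_negative {n k : ℕ} (hk1 : 1 ≤ k) (hkn : k ≤ n) (q : ℝ≥0∞)
    (hq : q = 1 ∨ q = 2 ∨ q = ⊤) (hq1 : 1 ≤ q)
    (A T : Matrix (Fin n) (Fin n) ℝ) (hT : IsUnit T)
    (hneg : A.trace + ((n : ℝ) - (k : ℝ)) * logNorm q hq1 (T * (-A) * T⁻¹) < 0) :
    ∀ mus : Multiset ℂ, mus ≤ (A.charpoly.map (algebraMap ℝ ℂ)).roots →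
      Multiset.card mus = k → (mus.sum).re < 0 :=
  eigenvalue_sums_negative_general hkn q hq1 A T hT hneg
end
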